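/- For every (x,y,z) and n ≥ 2, ‖K^n((x,y,z),·) − Π(·)‖ ≤ ‖K_Z^{n−1}(z,·) − Π_Z(·)‖ ≤ ‖ν_z K*^{(n−2)}(·) − Π*(·)‖. -/

import Mathlib

open MeasureTheory ProbabilityTheory

noncomputable def tvDist {E : Type*} [MeasurableSpace E] (μ ν : Measure E) : ℝ :=
  ⨆ A : {A : Set E // MeasurableSet A}, |(μ A.1).toReal - (ν A.1).toReal|

noncomputable def kpow {E : Type*} [MeasurableSpace E] (P : Kernel E E) : ℕ → Kernel E E
  | 0 => Kernel.id
  | n + 1 => (kpow P n) ∘ₖ P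

/-!
Both inequalities come from the contraction `‖κ ∘ₘ μ - κ ∘ₘ ν‖ ≤ ‖μ - ν‖` of total variation
under a Markov kernel `κ`.

For the first, `K = M ∘ₖ δ_z`, where `δ_z` is the projection onto the `z`-coordinate and `M`
draws `(x, y)` given `z` and then `z'` given `(x, y)`; hence `K_Z = δ_z ∘ₖ M`,
`K^(m+1) = M ∘ₖ K_Z^m ∘ₖ δ_z` and `Π = M ∘ₘ Π_Z`.

For the second, `K* = Φ ∘ₖ Ψ`, where `Φ` appends `x ~ Π_{X|Z}(·|z)` to `(y, z)` and `Ψ` updates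
`y` and then `z`. Then `ν_z = Φ (y₀, z)` and `Π* = Φ ∘ₘ Π_{YZ}`, and since `Φ` keeps `z` while
`z ∘ Ψ ∘ Φ` is a `K_Z` step, the `Z`-marginal of `ν_z K*^m` is `K_Z^m(z, ·)`. One further `K_Z`
step, which fixes `Π_Z`, then gives the claim.
-/

section TotalVariation

variable {α β : Type*} [MeasurableSpace α] [MeasurableSpace β]

theorem tvDist_comm (μ ν : Measure α) : tvDist μ ν = tvDist ν μ := by
  simp only [tvDist, abs_sub_comm]

theorem abs_sub_le_tvDist (μ ν : Measure α) [IsFiniteMeasure μ] [IsFiniteMeasure ν]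
    {A : Set α} (hA : MeasurableSet A) : |(μ A).toReal - (ν A).toReal| ≤ tvDist μ ν := by
  refine le_ciSup (f := fun B : {B : Set α // MeasurableSet B} => |(μ B).toReal - (ν B).toReal|)
    ⟨μ.real .univ + ν.real .univ, ?_⟩ ⟨A, hA⟩
  rintro _ ⟨B, rfl⟩
  have hμ := measureReal_mono (μ := μ) (Set.subset_univ B.1)
  have hν := measureReal_mono (μ := ν) (Set.subset_univ B.1)
  simp only [measureReal_def] at hμ hν ⊢
  exact abs_sub_le_iff.2 ⟨by linarith [ENNReal.toReal_nonneg (a := ν B)],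
    by linarith [ENNReal.toReal_nonneg (a := μ B)]⟩

theorem exists_le_add_tvDist (μ ν : Measure α) [IsFiniteMeasure μ] [IsFiniteMeasure ν] :
    ∃ ρ : Measure α, IsFiniteMeasure ρ ∧ μ ≤ ρ + ν ∧ (ρ .univ).toReal ≤ tvDist μ ν := by
  obtain ⟨s, hs, hνμ, hμν⟩ := exists_isHahnDecomposition ν μ
  refine ⟨μ.restrict s - ν.restrict s, inferInstance, ?_, ?_⟩
  · calc μ = μ.restrict s + μ.restrict sᶜ := (Measure.restrict_add_restrict_compl hs).symm
      _ ≤ (μ.restrict s - ν.restrict s + ν.restrict s) + ν.restrict sᶜ := by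
        rw [Measure.sub_add_cancel_of_le hνμ]; exact add_le_add le_rfl hμν
      _ = μ.restrict s - ν.restrict s + ν := by
        rw [add_assoc, Measure.restrict_add_restrict_compl hs]
  · have hle : ν s ≤ μ s := by simpa using hνμ .univ
    rw [Measure.sub_apply .univ hνμ, Measure.restrict_apply_univ, Measure.restrict_apply_univ,
      ENNReal.toReal_sub_of_le hle (measure_ne_top _ _)]
    exact (le_abs_self _).trans (abs_sub_le_tvDist μ ν hs)

theorem toReal_comp_apply_sub_le_tvDist (κ : Kernel α β) [IsMarkovKernel κ] (μ ν : Measure α)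
    [IsFiniteMeasure μ] [IsFiniteMeasure ν] {A : Set β} (hA : MeasurableSet A) :
    ((κ ∘ₘ μ) A).toReal - ((κ ∘ₘ ν) A).toReal ≤ tvDist μ ν := by
  obtain ⟨ρ, _, hle, hρ⟩ := exists_le_add_tvDist μ ν
  have hA_le : (κ ∘ₘ μ) A ≤ ρ .univ + (κ ∘ₘ ν) A := by
    simp only [Measure.bind_apply hA κ.aemeasurable]
    calc ∫⁻ a, κ a A ∂μ ≤ ∫⁻ a, κ a A ∂(ρ + ν) := lintegral_mono' hle le_rfl
      _ = ∫⁻ a, κ a A ∂ρ + ∫⁻ a, κ a A ∂ν := lintegral_add_measure _ _ _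
      _ ≤ ρ .univ + ∫⁻ a, κ a A ∂ν := by
        gcongr
        exact (lintegral_mono fun a => prob_le_one).trans_eq (by simp)
  have := ENNReal.toReal_mono (by finiteness) hA_le
  rw [ENNReal.toReal_add (measure_ne_top _ _) (measure_ne_top _ _)] at this
  linarith

theorem tvDist_comp_le (κ : Kernel α β) [IsMarkovKernel κ] (μ ν : Measure α)
    [IsFiniteMeasure μ] [IsFiniteMeasure ν] : tvDist (κ ∘ₘ μ) (κ ∘ₘ ν) ≤ tvDist μ ν :=
  ciSup_le fun A => abs_sub_le_iff.2 ⟨toReal_comp_apply_sub_le_tvDist κ μ ν A.2,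
    tvDist_comm ν μ ▸ toReal_comp_apply_sub_le_tvDist κ ν μ A.2⟩

theorem tvDist_map_le {f : α → β} (hf : Measurable f) (μ ν : Measure α) [IsFiniteMeasure μ]
    [IsFiniteMeasure ν] : tvDist (μ.map f) (ν.map f) ≤ tvDist μ ν := by
  simpa only [Measure.deterministic_comp_eq_map] using tvDist_comp_le (.deterministic f hf) μ ν

end TotalVariation

section KernelPowers

variable {α β γ : Type*} [MeasurableSpace α] [MeasurableSpace β] [MeasurableSpace γ]

instance isMarkovKernel_kpow (P : Kernel α α) [IsMarkovKernel P] :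
    ∀ n, IsMarkovKernel (kpow P n)
  | 0 => by rw [kpow]; infer_instance
  | n + 1 => by rw [kpow]; have := isMarkovKernel_kpow P n; infer_instance

theorem kpow_comp_eq_comp_kpow {P : Kernel α α} {Q : Kernel β β} {B : Kernel β α}
    (h : P ∘ₖ B = B ∘ₖ Q) : ∀ m, kpow P m ∘ₖ B = B ∘ₖ kpow Q m
  | 0 => by rw [kpow, kpow, Kernel.id_comp, Kernel.comp_id]
  | m + 1 => by
    rw [kpow, kpow, Kernel.comp_assoc, h, ← Kernel.comp_assoc, kpow_comp_eq_comp_kpow h m,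
      Kernel.comp_assoc]

theorem kpow_succ' (P : Kernel α α) (m : ℕ) : kpow P (m + 1) = P ∘ₖ kpow P m :=
  kpow_comp_eq_comp_kpow rfl m

end KernelPowers

section Deinitialization

variable {α β γ : Type*} [MeasurableSpace α] [MeasurableSpace β] [MeasurableSpace γ]

theorem kpow_succ_comp_deterministic (M : Kernel β α) {f : α → β} (hf : Measurable f) (m : ℕ) :
    kpow (M ∘ₖ .deterministic f hf) (m + 1) =
      M ∘ₖ kpow (.deterministic f hf ∘ₖ M) m ∘ₖ .deterministic f hf := by
  rw [kpow, ← Kernel.comp_assoc, kpow_comp_eq_comp_kpow (Kernel.comp_assoc M _ M) m]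

theorem tvDist_kpow_succ_comp_deterministic_le (M : Kernel β α) [IsMarkovKernel M] {f : α → β}
    (hf : Measurable f) (μ : Measure β) [IsFiniteMeasure μ] (m : ℕ) (a : α) :
    tvDist (kpow (M ∘ₖ .deterministic f hf) (m + 1) a) (M ∘ₘ μ) ≤
      tvDist (kpow (.deterministic f hf ∘ₖ M) m (f a)) μ := by
  rw [kpow_succ_comp_deterministic, Kernel.comp_deterministic_eq_comap, Kernel.comap_apply,
    Kernel.comp_apply]
  exact tvDist_comp_le M _ μ

theorem deterministic_comp_kpow_comp {Φ : Kernel β α} {Ψ : Kernel α β} {P : Kernel γ γ}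
    {g : α → γ} {h : β → γ} (hg : Measurable g) (hh : Measurable h)
    (hΦ : .deterministic g hg ∘ₖ Φ = .deterministic h hh)
    (hP : .deterministic h hh ∘ₖ (Ψ ∘ₖ Φ) = P ∘ₖ .deterministic h hh) (m : ℕ) :
    .deterministic g hg ∘ₖ (kpow (Φ ∘ₖ Ψ) m ∘ₖ Φ) = kpow P m ∘ₖ .deterministic h hh := by
  rw [kpow_comp_eq_comp_kpow (Kernel.comp_assoc Φ Ψ Φ) m,
    ← Kernel.comp_assoc, hΦ, kpow_comp_eq_comp_kpow hP.symm m]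

theorem tvDist_kpow_succ_le_tvDist_kpow_comp (Φ : Kernel β α) [IsMarkovKernel Φ]
    (Ψ : Kernel α β) [IsMarkovKernel Ψ] (P : Kernel γ γ) [IsMarkovKernel P]
    {g : α → γ} {h : β → γ} (hg : Measurable g) (hh : Measurable h)
    (hΦ : .deterministic g hg ∘ₖ Φ = .deterministic h hh)
    (hP : .deterministic h hh ∘ₖ (Ψ ∘ₖ Φ) = P ∘ₖ .deterministic h hh)
    (μ : Measure β) [IsFiniteMeasure μ] (hμ : P.Invariant (μ.map h)) (m : ℕ) (b : β) :
    tvDist (kpow P (m + 1) (h b)) (μ.map h) ≤ tvDist (kpow (Φ ∘ₖ Ψ) m ∘ₘ Φ b) (Φ ∘ₘ μ) := by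
  have hchain : (kpow (Φ ∘ₖ Ψ) m ∘ₘ Φ b).map g = kpow P m (h b) := by
    rw [← Measure.deterministic_comp_eq_map hg, ← Kernel.comp_apply, ← Kernel.comp_apply,
      deterministic_comp_kpow_comp hg hh hΦ hP, Kernel.comp_deterministic_eq_comap,
      Kernel.comap_apply]
  have hstat : (Φ ∘ₘ μ).map g = μ.map h := by
    rw [← Measure.deterministic_comp_eq_map hg, Measure.comp_assoc, hΦ,
      Measure.deterministic_comp_eq_map]
  calc tvDist (kpow P (m + 1) (h b)) (μ.map h)
      = tvDist (P ∘ₘ kpow P m (h b)) (P ∘ₘ μ.map h) := by rw [kpow_succ', Kernel.comp_apply, hμ]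
    _ ≤ tvDist (kpow P m (h b)) (μ.map h) := tvDist_comp_le P _ _
    _ = tvDist ((kpow (Φ ∘ₖ Ψ) m ∘ₘ Φ b).map g) ((Φ ∘ₘ μ).map g) := by rw [hchain, hstat]
    _ ≤ tvDist (kpow (Φ ∘ₖ Ψ) m ∘ₘ Φ b) (Φ ∘ₘ μ) := tvDist_map_le hg _ _

end Deinitialization

section Composition

variable {α β γ δ : Type*} [MeasurableSpace α] [MeasurableSpace β] [MeasurableSpace γ]
  [MeasurableSpace δ]

theorem MeasureTheory.Measure.comp_map_eq_comp_comap (κ : Kernel β γ) {f : α → β}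
    (hf : Measurable f) (μ : Measure α) : κ ∘ₘ μ.map f = κ.comap f hf ∘ₘ μ := by
  rw [← Measure.deterministic_comp_eq_map hf, Measure.comp_assoc,
    Kernel.comp_deterministic_eq_comap]

theorem MeasureTheory.Measure.comp_map_eq_map_of_map_prodMk_eq_compProd {ρ : Measure δ}
    [IsFiniteMeasure ρ] {f : δ → α} {g : δ → β} (hf : Measurable f) (κ : Kernel α β) [IsSFiniteKernel κ]
    (h : ρ.map (fun ω => (f ω, g ω)) = ρ.map f ⊗ₘ κ) : κ ∘ₘ ρ.map f = ρ.map g := by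
  rw [← Measure.snd_compProd, ← h, Measure.snd_map_prodMk hf]

theorem ProbabilityTheory.Kernel.deterministic_prod_apply {f : α → β} (hf : Measurable f)
    (κ : Kernel α γ) [IsSFiniteKernel κ] (a : α) :
    (deterministic f hf ×ₖ κ) a = (κ a).map (Prod.mk (f a)) := by
  ext s hs
  rw [deterministic_prod_apply' hf κ a hs, Measure.map_apply measurable_prodMk_left hs]

theorem ProbabilityTheory.Kernel.comp_deterministic_prod_apply (η : Kernel (β × γ) δ)
    {f : α → β} (hf : Measurable f) (κ : Kernel α γ) [IsSFiniteKernel κ] (a : α) :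
    (η ∘ₖ (deterministic f hf ×ₖ κ)) a = (κ a).bind fun c => η (f a, c) := by
  rw [comp_apply, deterministic_prod_apply,
    Measure.comp_map_eq_comp_comap _ measurable_prodMk_left]
  rfl

end Composition

section AppendKernel

variable {α β γ δ : Type*} [MeasurableSpace α] [MeasurableSpace β] [MeasurableSpace γ]
  [MeasurableSpace δ]

noncomputable def appendKernel (κ : Kernel (α × β) γ) : Kernel (α × β) (α × β × γ) :=
  (Kernel.id ×ₖ κ).map MeasurableEquiv.prodAssoc

instance (κ : Kernel (α × β) γ) [IsMarkovKernel κ] : IsMarkovKernel (appendKernel κ) := by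
  rw [appendKernel]; exact Kernel.IsMarkovKernel.map _ (MeasurableEquiv.measurable _)

theorem appendKernel_apply (κ : Kernel (α × β) γ) [IsSFiniteKernel κ] (q : α × β) :
    appendKernel κ q = (κ q).map fun c => (q.1, q.2, c) := by
  rw [appendKernel, Kernel.map_apply _ (MeasurableEquiv.measurable _), Kernel.id,
    Kernel.deterministic_prod_apply,
    Measure.map_map (MeasurableEquiv.measurable _) measurable_prodMk_left]
  rfl

theorem comp_appendKernel_apply (η : Kernel (α × β × γ) δ) (κ : Kernel (α × β) γ)
    [IsSFiniteKernel κ] (q : α × β) :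
    (η ∘ₖ appendKernel κ) q = (κ q).bind fun c => η (q.1, q.2, c) := by
  rw [Kernel.comp_apply, appendKernel_apply, Measure.comp_map_eq_comp_comap _ (by fun_prop)]
  rfl

theorem deterministic_snd_snd_comp_appendKernel (κ : Kernel (α × β) γ) [IsSFiniteKernel κ] :
    .deterministic (fun p : α × β × γ => p.2.2) measurable_snd.snd ∘ₖ appendKernel κ = κ := by
  ext1 q
  rw [Kernel.deterministic_comp_eq_map, Kernel.map_apply _ measurable_snd.snd, appendKernel_apply,
    Measure.map_map measurable_snd.snd (by fun_prop)]
  exact Measure.map_id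

theorem deterministic_fst_snd_comp_appendKernel (κ : Kernel (α × β) γ) [IsMarkovKernel κ] :
    .deterministic (fun p : α × β × γ => p.2.1) measurable_snd.fst ∘ₖ appendKernel κ =
      .deterministic Prod.snd measurable_snd := by
  ext1 q
  rw [Kernel.deterministic_comp_eq_map, Kernel.map_apply _ measurable_snd.fst, appendKernel_apply,
    Measure.map_map measurable_snd.fst (by fun_prop), Kernel.deterministic_apply]
  simp [Function.comp_def, Measure.map_const]

theorem appendKernel_comp_eq_map_compProd (κ : Kernel (α × β) γ) [IsSFiniteKernel κ]
    (μ : Measure (α × β)) [SFinite μ] :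
    appendKernel κ ∘ₘ μ = (μ ⊗ₘ κ).map MeasurableEquiv.prodAssoc := by
  rw [Measure.compProd_eq_comp_prod, Measure.map_comp _ _ (MeasurableEquiv.measurable _)]
  rfl

end AppendKernel

section BlockGibbs

variable {X Y Z : Type*} [MeasurableSpace X] [MeasurableSpace Y] [MeasurableSpace Z]

/-- From `(y, z, x)`, draw `y' ~ PYgXZ (x, z)`, then `z' ~ PZgXY (x, y')`, and return `(y', z')`. -/
noncomputable def yzUpdate (PYgXZ : Kernel (X × Z) Y) (PZgXY : Kernel (X × Y) Z) :
    Kernel (Y × Z × X) (Y × Z) :=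
  (.deterministic Prod.snd measurable_snd ×ₖ PZgXY) ∘ₖ
    (.deterministic (fun p : Y × Z × X => p.2.2) measurable_snd.snd ×ₖ
      PYgXZ.comap (fun p => (p.2.2, p.2.1)) (measurable_snd.snd.prodMk measurable_snd.fst))

instance (PYgXZ : Kernel (X × Z) Y) [IsMarkovKernel PYgXZ] (PZgXY : Kernel (X × Y) Z)
    [IsMarkovKernel PZgXY] : IsMarkovKernel (yzUpdate PYgXZ PZgXY) := by
  rw [yzUpdate]; infer_instance

theorem eq_appendKernel_comp_comp_deterministic {K : Kernel (X × Y × Z) (X × Y × Z)}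
    {PXYgZ : Kernel Z (X × Y)} {PZgXY : Kernel (X × Y) Z} [IsSFiniteKernel PZgXY]
    (hK : ∀ p : X × Y × Z, K p = (PXYgZ p.2.2).bind fun q =>
        (PZgXY q).map fun z' => (q.1, q.2, z')) :
    K = appendKernel PZgXY ∘ₖ PXYgZ ∘ₖ .deterministic (fun p => p.2.2) measurable_snd.snd := by
  ext1 p
  rw [hK, Kernel.comp_deterministic_eq_comap, Kernel.comap_apply, Kernel.comp_apply]
  exact congrArg _ (funext fun q => (appendKernel_apply PZgXY q).symm)

theorem eq_appendKernel_comp_yzUpdate {Kstar : Kernel (Y × Z × X) (Y × Z × X)}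
    {PXgZ : Kernel Z X} [IsSFiniteKernel PXgZ] {PYgXZ : Kernel (X × Z) Y}
    [IsSFiniteKernel PYgXZ] {PZgXY : Kernel (X × Y) Z} [IsSFiniteKernel PZgXY]
    (hKstar : ∀ p : Y × Z × X, Kstar p =
      (PYgXZ (p.2.2, p.2.1)).bind fun y' =>
        (PZgXY (p.2.2, y')).bind fun z' =>
          (PXgZ z').map fun x' => (y', z', x')) :
    Kstar = appendKernel (PXgZ.comap Prod.snd measurable_snd) ∘ₖ yzUpdate PYgXZ PZgXY := by
  ext1 p
  simp only [hKstar, yzUpdate, ← Kernel.comp_assoc, Kernel.comp_deterministic_prod_apply,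
    appendKernel_apply, Kernel.comap_apply]

theorem deterministic_snd_comp_yzUpdate_comp_appendKernel {PXgZ : Kernel Z X}
    [IsSFiniteKernel PXgZ] {PYgXZ : Kernel (X × Z) Y} [IsSFiniteKernel PYgXZ]
    {PZgXY : Kernel (X × Y) Z} [IsSFiniteKernel PZgXY] {PXYgZ : Kernel Z (X × Y)}
    (hseq : ∀ z : Z, PXYgZ z = (PXgZ z).bind fun x => (PYgXZ (x, z)).map fun y => (x, y)) :
    .deterministic Prod.snd measurable_snd ∘ₖ
        (yzUpdate PYgXZ PZgXY ∘ₖ appendKernel (PXgZ.comap Prod.snd measurable_snd)) =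
      PZgXY ∘ₖ PXYgZ ∘ₖ .deterministic Prod.snd measurable_snd := by
  have hY : (Kernel.deterministic (fun p : Y × Z × X => p.2.2) measurable_snd.snd ×ₖ
      PYgXZ.comap (fun p => (p.2.2, p.2.1)) (measurable_snd.snd.prodMk measurable_snd.fst)) ∘ₖ
        appendKernel (PXgZ.comap Prod.snd measurable_snd) =
      PXYgZ ∘ₖ .deterministic Prod.snd measurable_snd := by
    ext1 q
    simp only [comp_appendKernel_apply, Kernel.comp_deterministic_eq_comap, Kernel.comap_apply,
      hseq, Kernel.deterministic_prod_apply]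
  have hZ : Kernel.deterministic Prod.snd measurable_snd ∘ₖ
      (.deterministic Prod.snd measurable_snd ×ₖ PZgXY) = PZgXY := by
    rw [Kernel.deterministic_comp_eq_map, ← Kernel.snd_eq, Kernel.snd_prod]
  rw [yzUpdate, Kernel.comp_assoc, ← Kernel.comp_assoc (.deterministic _ _), hZ, hY,
    Kernel.comp_assoc]

variable {Pi : Measure (X × Y × Z)} [IsFiniteMeasure Pi] {PXYgZ : Kernel Z (X × Y)}
  [IsSFiniteKernel PXYgZ] {PZgXY : Kernel (X × Y) Z} [IsSFiniteKernel PZgXY]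

theorem appendKernel_comp_comp_map_eq
    (hZgXY : Pi.map (fun p : X × Y × Z => ((p.1, p.2.1), p.2.2)) =
      (Pi.map fun p : X × Y × Z => (p.1, p.2.1)) ⊗ₘ PZgXY)
    (hXYgZ : Pi.map (fun p : X × Y × Z => (p.2.2, (p.1, p.2.1))) =
      (Pi.map fun p : X × Y × Z => p.2.2) ⊗ₘ PXYgZ) :
    (appendKernel PZgXY ∘ₖ PXYgZ) ∘ₘ Pi.map (fun p => p.2.2) = Pi := by
  rw [← Measure.comp_assoc,
    Measure.comp_map_eq_map_of_map_prodMk_eq_compProd measurable_snd.snd PXYgZ hXYgZ,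
    appendKernel_comp_eq_map_compProd, ← hZgXY, Measure.map_map (MeasurableEquiv.measurable _)
      (by fun_prop)]
  exact Measure.map_id

theorem invariant_map_snd_snd
    (hZgXY : Pi.map (fun p : X × Y × Z => ((p.1, p.2.1), p.2.2)) =
      (Pi.map fun p : X × Y × Z => (p.1, p.2.1)) ⊗ₘ PZgXY)
    (hXYgZ : Pi.map (fun p : X × Y × Z => (p.2.2, (p.1, p.2.1))) =
      (Pi.map fun p : X × Y × Z => p.2.2) ⊗ₘ PXYgZ) :
    (PZgXY ∘ₖ PXYgZ).Invariant (Pi.map fun p => p.2.2) := by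
  rw [Kernel.Invariant, ← Measure.comp_assoc,
    Measure.comp_map_eq_map_of_map_prodMk_eq_compProd measurable_snd.snd PXYgZ hXYgZ,
    Measure.comp_map_eq_map_of_map_prodMk_eq_compProd (by fun_prop) PZgXY hZgXY]

end BlockGibbs

theorem blockGibbs_tv_chain_general
    {X Y Z : Type*} [MeasurableSpace X] [MeasurableSpace Y] [MeasurableSpace Z]
    (Pi : Measure (X × Y × Z)) [IsProbabilityMeasure Pi]
    (PXgZ : Kernel Z X) [IsMarkovKernel PXgZ]
    (PYgXZ : Kernel (X × Z) Y) [IsMarkovKernel PYgXZ]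
    (PZgXY : Kernel (X × Y) Z) [IsMarkovKernel PZgXY]
    (PXYgZ : Kernel Z (X × Y)) [IsMarkovKernel PXYgZ]
    (hZgXY : Pi.map (fun p : X × Y × Z => ((p.1, p.2.1), p.2.2)) = (Pi.map fun p : X × Y × Z => (p.1, p.2.1)) ⊗ₘ PZgXY)
    (hXYgZ : Pi.map (fun p : X × Y × Z => (p.2.2, (p.1, p.2.1))) = (Pi.map fun p : X × Y × Z => p.2.2) ⊗ₘ PXYgZ)
    (hseq : ∀ z : Z, PXYgZ z = (PXgZ z).bind fun x => (PYgXZ (x, z)).map fun y => (x, y))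
    (K : Kernel (X × Y × Z) (X × Y × Z))
    (hK : ∀ p : X × Y × Z, K p = (PXYgZ p.2.2).bind fun q =>
        (PZgXY q).map fun z' => (q.1, q.2, z'))
    (KZ : Kernel Z Z)
    (hKZ : ∀ z : Z, KZ z = (PXYgZ z).bind fun q => PZgXY q)
    (Kstar : Kernel (Y × Z × X) (Y × Z × X))
    (hKstar : ∀ p : Y × Z × X, Kstar p =
      (PYgXZ (p.2.2, p.2.1)).bind fun y' =>
        (PZgXY (p.2.2, y')).bind fun z' =>
          (PXgZ z').map fun x' => (y', z', x'))
    (PiStar : Measure (Y × Z × X))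
    (hPiStar : PiStar = (Pi.map fun p : X × Y × Z => (p.2.1, p.2.2)).bind fun q =>
        (PXgZ q.2).map fun x => (q.1, q.2, x))
    :
    ∀ (x : X) (y : Y) (z : Z) (y₀ : Y) (n : ℕ), 2 ≤ n →
      tvDist ((kpow K n) (x, y, z)) Pi ≤
          tvDist ((kpow KZ (n - 1)) z) (Pi.map fun p : X × Y × Z => p.2.2) ∧
        tvDist ((kpow KZ (n - 1)) z) (Pi.map fun p : X × Y × Z => p.2.2) ≤
          tvDist (((PXgZ z).map fun x' => (y₀, z, x')).bind fun u => (kpow Kstar (n - 2)) u)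
            PiStar := by
  intro x y z y₀ n hn
  obtain ⟨m, rfl⟩ : ∃ m, n = m + 2 := ⟨n - 2, by omega⟩
  obtain rfl : KZ = PZgXY ∘ₖ PXYgZ := Kernel.ext fun z => by rw [hKZ, Kernel.comp_apply]
  obtain rfl := eq_appendKernel_comp_comp_deterministic hK
  obtain rfl := eq_appendKernel_comp_yzUpdate hKstar
  subst hPiStar
  have hΦ (q : Y × Z) : (PXgZ q.2).map (fun x => (q.1, q.2, x)) =
      appendKernel (PXgZ.comap Prod.snd measurable_snd) q :=
    (appendKernel_apply (PXgZ.comap Prod.snd measurable_snd) q).symm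
  have hZmarg : (Pi.map fun p : X × Y × Z => (p.2.1, p.2.2)).map Prod.snd =
      Pi.map fun p => p.2.2 :=
    Measure.map_map measurable_snd (by fun_prop)
  have hinv := invariant_map_snd_snd hZgXY hXYgZ
  constructor
  · have h := tvDist_kpow_succ_comp_deterministic_le (appendKernel PZgXY ∘ₖ PXYgZ)
      measurable_snd.snd (Pi.map fun p => p.2.2) (m + 1) (x, y, z)
    rwa [← Kernel.comp_assoc, deterministic_snd_snd_comp_appendKernel,
      appendKernel_comp_comp_map_eq hZgXY hXYgZ] at h
  · rw [hΦ (y₀, z), funext hΦ, ← hZmarg]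
    rw [← hZmarg] at hinv
    exact tvDist_kpow_succ_le_tvDist_kpow_comp _ (yzUpdate PYgXZ PZgXY) _ measurable_snd.fst
      measurable_snd (deterministic_fst_snd_comp_appendKernel _)
      (deterministic_snd_comp_yzUpdate_comp_appendKernel hseq) _ hinv m (y₀, z)

/-- `‖K^n((x,y,z),·) − Π‖ ≤ ‖K_Z^{n-1}(z,·) − Π_Z‖ ≤ ‖ν_z K*^{(n-2)} − Π*‖` for n ≥ 2. -/
theorem blockGibbs_tv_chain
    {X Y Z : Type*} [MeasurableSpace X] [MeasurableSpace Y] [MeasurableSpace Z]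
    (Pi : Measure (X × Y × Z)) [IsProbabilityMeasure Pi]
    (PXgZ : Kernel Z X) [IsMarkovKernel PXgZ]
    (PYgXZ : Kernel (X × Z) Y) [IsMarkovKernel PYgXZ]
    (PZgXY : Kernel (X × Y) Z) [IsMarkovKernel PZgXY]
    (PXYgZ : Kernel Z (X × Y)) [IsMarkovKernel PXYgZ]
    (hXgZ : Pi.map (fun p : X × Y × Z => (p.2.2, p.1)) = (Pi.map fun p : X × Y × Z => p.2.2) ⊗ₘ PXgZ)
    (hYgXZ : Pi.map (fun p : X × Y × Z => ((p.1, p.2.2), p.2.1)) = (Pi.map fun p : X × Y × Z => (p.1, p.2.2)) ⊗ₘ PYgXZ)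
    (hZgXY : Pi.map (fun p : X × Y × Z => ((p.1, p.2.1), p.2.2)) = (Pi.map fun p : X × Y × Z => (p.1, p.2.1)) ⊗ₘ PZgXY)
    (hXYgZ : Pi.map (fun p : X × Y × Z => (p.2.2, (p.1, p.2.1))) = (Pi.map fun p : X × Y × Z => p.2.2) ⊗ₘ PXYgZ)
    (hseq : ∀ z : Z, PXYgZ z = (PXgZ z).bind fun x => (PYgXZ (x, z)).map fun y => (x, y))
    (K : Kernel (X × Y × Z) (X × Y × Z))
    (hK : ∀ p : X × Y × Z, K p = (PXYgZ p.2.2).bind fun q =>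
        (PZgXY q).map fun z' => (q.1, q.2, z'))
    (KZ : Kernel Z Z)
    (hKZ : ∀ z : Z, KZ z = (PXYgZ z).bind fun q => PZgXY q)
    (Kstar : Kernel (Y × Z × X) (Y × Z × X))
    (hKstar : ∀ p : Y × Z × X, Kstar p =
      (PYgXZ (p.2.2, p.2.1)).bind fun y' =>
        (PZgXY (p.2.2, y')).bind fun z' =>
          (PXgZ z').map fun x' => (y', z', x'))
    (PiStar : Measure (Y × Z × X))
    (hPiStar : PiStar = (Pi.map fun p : X × Y × Z => (p.2.1, p.2.2)).bind fun q =>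
        (PXgZ q.2).map fun x => (q.1, q.2, x))
    :
    ∀ (x : X) (y : Y) (z : Z) (y₀ : Y) (n : ℕ), 2 ≤ n →
      tvDist ((kpow K n) (x, y, z)) Pi ≤
          tvDist ((kpow KZ (n - 1)) z) (Pi.map fun p : X × Y × Z => p.2.2) ∧
        tvDist ((kpow KZ (n - 1)) z) (Pi.map fun p : X × Y × Z => p.2.2) ≤
          tvDist (((PXgZ z).map fun x' => (y₀, z, x')).bind fun u => (kpow Kstar (n - 2)) u)
            PiStar :=
  blockGibbs_tv_chain_general Pi PXgZ PYgXZ PZgXY PXYgZ hZgXY hXYgZ hseq K hK KZ hKZ Kstar hKstar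
    PiStar hPiStar
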